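/- arXiv:2509.19601 — 3 statements merged into one kernel-verified Lean document; each statement's English description precedes it below -/
import Mathlib

section
/- Let A₂, Â₂ > 0, θ₁, θ̂₁, θ₂, θ̂₂ > 0, and let f₁ : [0,1] → ℝ be continuous, non-constant, and nonnegative. Suppose for all u₁ ∈ [0,1]: θ₁·f₁(u₁)/(1+f₁(u₁)+A₂) = θ̂₁·f̂₁(u₁)/(1+f̂₁(u₁)+Â₂) and θ₂·A₂/(1+f₁(u₁)+A₂) = θ̂₂·Â₂/(1+f̂₁(u₁)+Â₂), where f̂₁ : [0,1] → ℝ is nonnegative continuous. Then θ₁ = θ̂₁. -/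
/-!
Clearing denominators, the second equation makes `1 + f̂₁ + Â₂` proportional to `1 + f₁ + A₂`;
substituting this into the first equation cancels that common factor and leaves the linear relation
`θ̂₂ Â₂ (θ₁ - θ̂₁) f₁(u) = const`. So `θ₁ ≠ θ̂₁` would force `f₁` to be constant.
-/

theorem mul_sub_mul_eq_of_div_eq_div {K : Type*} [Field K] {θ θ' a b x y A A' : K}
    (hD : 1 + x + A ≠ 0) (hD' : 1 + y + A' ≠ 0)
    (h₁ : θ * x / (1 + x + A) = θ' * y / (1 + y + A'))
    (h₂ : a / (1 + x + A) = b / (1 + y + A')) :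
    b * (θ - θ') * x = θ' * (b * (1 + A) - a * (1 + A')) := by
  rw [div_eq_div_iff hD hD'] at h₁ h₂
  apply mul_left_cancel₀ hD
  linear_combination a * h₁ + (θ' * (1 + x + A) - θ * x) * h₂

theorem stmt_7_general (A₂ Ahat₂ θ₁ θhat₁ θ₂ θhat₂ : ℝ)
    (hA₂ : 0 < A₂) (hAhat₂ : 0 < Ahat₂)
    (hθhat₂ : 0 < θhat₂)
    (f₁ fhat₁ : ℝ → ℝ)
    (hnc : ¬ ∃ c, ∀ u ∈ Set.Icc (0:ℝ) 1, f₁ u = c)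
    (hf₁pos : ∀ u ∈ Set.Icc (0:ℝ) 1, 0 ≤ f₁ u)
    (hfhat₁pos : ∀ u ∈ Set.Icc (0:ℝ) 1, 0 ≤ fhat₁ u)
    (h1 : ∀ u₁ ∈ Set.Icc (0:ℝ) 1,
      θ₁ * f₁ u₁ / (1 + f₁ u₁ + A₂) = θhat₁ * fhat₁ u₁ / (1 + fhat₁ u₁ + Ahat₂))
    (h2 : ∀ u₁ ∈ Set.Icc (0:ℝ) 1,
      θ₂ * A₂ / (1 + f₁ u₁ + A₂) = θhat₂ * Ahat₂ / (1 + fhat₁ u₁ + Ahat₂)) :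
    θ₁ = θhat₁ := by
  by_contra hne
  have hcoeff : θhat₂ * Ahat₂ * (θ₁ - θhat₁) ≠ 0 := by
    have := sub_ne_zero.mpr hne
    positivity
  refine hnc ⟨θhat₁ * (θhat₂ * Ahat₂ * (1 + A₂) - θ₂ * A₂ * (1 + Ahat₂)) /
      (θhat₂ * Ahat₂ * (θ₁ - θhat₁)), fun u hu => ?_⟩
  have hD : 1 + f₁ u + A₂ ≠ 0 := by linarith [hf₁pos u hu]
  have hD' : 1 + fhat₁ u + Ahat₂ ≠ 0 := by linarith [hfhat₁pos u hu]
  rw [eq_div_iff hcoeff, mul_comm]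
  exact mul_sub_mul_eq_of_div_eq_div hD hD' (h1 u hu) (h2 u hu)

theorem stmt_7 (A₂ Ahat₂ θ₁ θhat₁ θ₂ θhat₂ : ℝ)
    (hA₂ : 0 < A₂) (hAhat₂ : 0 < Ahat₂)
    (hθ₁ : 0 < θ₁) (hθhat₁ : 0 < θhat₁) (hθ₂ : 0 < θ₂) (hθhat₂ : 0 < θhat₂)
    (f₁ fhat₁ : ℝ → ℝ)
    (hf₁ : ContinuousOn f₁ (Set.Icc 0 1))
    (hnc : ¬ ∃ c, ∀ u ∈ Set.Icc (0:ℝ) 1, f₁ u = c)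
    (hf₁pos : ∀ u ∈ Set.Icc (0:ℝ) 1, 0 ≤ f₁ u)
    (hfhat₁ : ContinuousOn fhat₁ (Set.Icc 0 1))
    (hfhat₁pos : ∀ u ∈ Set.Icc (0:ℝ) 1, 0 ≤ fhat₁ u)
    (h1 : ∀ u₁ ∈ Set.Icc (0:ℝ) 1,
      θ₁ * f₁ u₁ / (1 + f₁ u₁ + A₂) = θhat₁ * fhat₁ u₁ / (1 + fhat₁ u₁ + Ahat₂))
    (h2 : ∀ u₁ ∈ Set.Icc (0:ℝ) 1,
      θ₂ * A₂ / (1 + f₁ u₁ + A₂) = θhat₂ * Ahat₂ / (1 + fhat₁ u₁ + Ahat₂)) :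
    θ₁ = θhat₁ :=
  stmt_7_general A₂ Ahat₂ θ₁ θhat₁ θ₂ θhat₂ hA₂ hAhat₂ hθhat₂ f₁ fhat₁ hnc hf₁pos hfhat₁pos h1 h2
end

section
/- Fix positive reals with f₁(u₁¹) ≠ f₁(u₁²), f₂(u₂¹) ≠ f₂(u₂²), θ₁ ≠ 0, θ₂ ≠ 0, f₁(1) ≠ 0, f₂(1) ≠ 0. The map ℱ : (f₁(u₁¹), f₁(u₁²), f₁(1), f₂(u₂¹), f₂(u₂²), f₂(1), θ₁, θ₂) ↦ (G₁₁¹, G₂₁¹, G₁₂¹, G₂₂¹, G₁₁², G₂₁², G₁₂², G₂₂²) is injective, where G₁₁ʲ = θ₁f₁(u₁ʲ)/(1+f₁(u₁ʲ)+f₂(1)), G₂₁ʲ = θ₂f₂(1)/(1+f₁(u₁ʲ)+f₂(1)), G₁₂ᵏ = θ₁f₁(1)/(1+f₁(1)+f₂(u₂ᵏ)), G₂₂ᵏ = θ₂f₂(u₂ᵏ)/(1+f₁(1)+f₂(u₂ᵏ)). -/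
/-- The output tuple of Lemma 1:
`(G₁₁¹, G₂₁¹, G₁₂¹, G₂₂¹, G₁₁², G₂₁², G₁₂², G₂₂²)` as a function of
`x = (a₁, a₂, a₃, b₁, b₂, b₃, θ₁, θ₂)` where `aⱼ = f₁(u₁ʲ)`, `a₃ = f₁(1)`,
`bₖ = f₂(u₂ᵏ)`, `b₃ = f₂(1)`. -/
noncomputable def lemma1Map (x : Fin 8 → ℝ) : Fin 8 → ℝ :=
  ![x 6 * x 0 / (1 + x 0 + x 5),
    x 7 * x 5 / (1 + x 0 + x 5),
    x 6 * x 2 / (1 + x 2 + x 3),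
    x 7 * x 3 / (1 + x 2 + x 3),
    x 6 * x 1 / (1 + x 1 + x 5),
    x 7 * x 5 / (1 + x 1 + x 5),
    x 6 * x 2 / (1 + x 2 + x 4),
    x 7 * x 4 / (1 + x 2 + x 4)]

/-!
The output consists of four pairs `share θ₁ θ₂ a b = (θ₁ a / D, θ₂ b / D)` with `D = 1 + a + b`.
For known `θ₁, θ₂` such a pair determines `D` through `1 - p / θ₁ - q / θ₂ = 1 / D`, hence `a`
and `b`. The coefficients themselves are read off from two pairs sharing one argument:
if `b` is shared then `θ₁ = (q p' - p q') / (q - q')`, and symmetrically for `θ₂`.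
-/

noncomputable def share (θ₁ θ₂ a b : ℝ) : ℝ × ℝ :=
  (θ₁ * a / (1 + a + b), θ₂ * b / (1 + a + b))

noncomputable def shareCoeff (u v : ℝ × ℝ) : ℝ :=
  (u.2 * v.1 - u.1 * v.2) / (u.2 - v.2)

section

variable {θ₁ θ₂ a a' b b' : ℝ}

theorem share_swap : (share θ₁ θ₂ a b).swap = share θ₂ θ₁ b a := by
  simp only [share, Prod.swap_prod_mk, add_right_comm]

theorem one_sub_share_div (hθ₁ : θ₁ ≠ 0) (hθ₂ : θ₂ ≠ 0) (hD : 1 + a + b ≠ 0) :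
    1 - (share θ₁ θ₂ a b).1 / θ₁ - (share θ₁ θ₂ a b).2 / θ₂ = (1 + a + b)⁻¹ := by
  simp only [share]
  field_simp
  ring

theorem share_inj (hθ₁ : θ₁ ≠ 0) (hθ₂ : θ₂ ≠ 0) (hD : 1 + a + b ≠ 0) (hD' : 1 + a' + b' ≠ 0) :
    share θ₁ θ₂ a b = share θ₁ θ₂ a' b' ↔ a = a' ∧ b = b' := by
  refine ⟨fun h => ?_, fun ⟨rfl, rfl⟩ => rfl⟩
  have hDD : 1 + a + b = 1 + a' + b' := by
    rw [← inv_inj, ← one_sub_share_div hθ₁ hθ₂ hD, ← one_sub_share_div hθ₁ hθ₂ hD', h]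
  have h₁ := congrArg Prod.fst h
  have h₂ := congrArg Prod.snd h
  simp only [share, hDD, div_left_inj' hD', mul_right_inj' hθ₁, mul_right_inj' hθ₂] at h₁ h₂
  exact ⟨h₁, h₂⟩

theorem shareCoeff_share (hθ₂ : θ₂ ≠ 0) (hb : b ≠ 0) (ha : a ≠ a')
    (hD : 1 + a + b ≠ 0) (hD' : 1 + a' + b ≠ 0) :
    shareCoeff (share θ₁ θ₂ a b) (share θ₁ θ₂ a' b) = θ₁ := by
  have hq : θ₂ * b / (1 + a + b) - θ₂ * b / (1 + a' + b) ≠ 0 := by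
    rw [div_sub_div _ _ hD hD']
    refine div_ne_zero ?_ (mul_ne_zero hD hD')
    rw [show θ₂ * b * (1 + a' + b) - (1 + a + b) * (θ₂ * b) = θ₂ * b * (a' - a) by ring]
    exact mul_ne_zero (mul_ne_zero hθ₂ hb) (sub_ne_zero.mpr ha.symm)
  simp only [shareCoeff, share]
  rw [div_eq_iff hq]
  field_simp
  ring

theorem shareCoeff_swap_share (hθ₁ : θ₁ ≠ 0) (ha : a ≠ 0) (hb : b ≠ b')
    (hD : 1 + a + b ≠ 0) (hD' : 1 + a + b' ≠ 0) :
    shareCoeff (share θ₁ θ₂ a b).swap (share θ₁ θ₂ a b').swap = θ₂ := by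
  rw [share_swap, share_swap]
  exact shareCoeff_share hθ₁ ha hb (by rwa [add_right_comm]) (by rwa [add_right_comm])

end

theorem share_eq_share_of_lemma1Map_eq {x y : Fin 8 → ℝ} (h : lemma1Map x = lemma1Map y) :
    share (x 6) (x 7) (x 0) (x 5) = share (y 6) (y 7) (y 0) (y 5) ∧
    share (x 6) (x 7) (x 1) (x 5) = share (y 6) (y 7) (y 1) (y 5) ∧
    share (x 6) (x 7) (x 2) (x 3) = share (y 6) (y 7) (y 2) (y 3) ∧
    share (x 6) (x 7) (x 2) (x 4) = share (y 6) (y 7) (y 2) (y 4) :=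
  ⟨Prod.ext (congrFun h 0) (congrFun h 1), Prod.ext (congrFun h 4) (congrFun h 5),
    Prod.ext (congrFun h 2) (congrFun h 3), Prod.ext (congrFun h 6) (congrFun h 7)⟩

theorem stmt_9 :
    Set.InjOn lemma1Map
      {x : Fin 8 → ℝ | (∀ i, 0 < x i) ∧ x 0 ≠ x 1 ∧ x 3 ≠ x 4} := by
  rintro x ⟨hx, hx01, hx34⟩ y ⟨hy, hy01, hy34⟩ hxy
  have hD : ∀ z : Fin 8 → ℝ, (∀ i, 0 < z i) → ∀ i j, 1 + z i + z j ≠ 0 := fun z hz i j => by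
    have := hz i; have := hz j; positivity
  obtain ⟨e₁, e₂, e₃, e₄⟩ := share_eq_share_of_lemma1Map_eq hxy
  have h₆ : x 6 = y 6 := by
    rw [← shareCoeff_share (θ₁ := x 6) (hx 7).ne' (hx 5).ne' hx01 (hD x hx 0 5) (hD x hx 1 5),
      e₁, e₂, shareCoeff_share (hy 7).ne' (hy 5).ne' hy01 (hD y hy 0 5) (hD y hy 1 5)]
  have h₇ : x 7 = y 7 := by
    rw [← shareCoeff_swap_share (θ₂ := x 7) (hx 6).ne' (hx 2).ne' hx34 (hD x hx 2 3) (hD x hx 2 4),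
      e₃, e₄, shareCoeff_swap_share (hy 6).ne' (hy 2).ne' hy34 (hD y hy 2 3) (hD y hy 2 4)]
  rw [h₆, h₇] at e₁ e₂ e₃ e₄
  have hθ₁ := (hy 6).ne'
  have hθ₂ := (hy 7).ne'
  obtain ⟨h₀, h₅⟩ := (share_inj hθ₁ hθ₂ (hD x hx 0 5) (hD y hy 0 5)).1 e₁
  obtain ⟨h₁, -⟩ := (share_inj hθ₁ hθ₂ (hD x hx 1 5) (hD y hy 1 5)).1 e₂
  obtain ⟨h₂, h₃⟩ := (share_inj hθ₁ hθ₂ (hD x hx 2 3) (hD y hy 2 3)).1 e₃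
  obtain ⟨-, h₄⟩ := (share_inj hθ₁ hθ₂ (hD x hx 2 4) (hD y hy 2 4)).1 e₄
  funext i
  fin_cases i <;> assumption
end

section
/- With the notation of Lemma 1 and assuming all denominators nonzero, the parameter θ₁ is recovered explicitly from the outputs by θ₁ = (G₁₁¹/G₂₁¹ − G₁₁²/G₂₁²) / (1/G₂₁¹ − 1/G₂₁²), provided G₂₁¹ ≠ G₂₁². -/
/-!
Each output pair `(1 / G₂₁ʲ, G₁₁ʲ / G₂₁ʲ)` lies on the line of slope `θ₁` with intercept
`-θ₁ (1 + b) / (θ₂ b)` independent of `j`, so the difference quotient of two such points with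
distinct abscissae recovers `θ₁`.
-/

theorem sub_div_sub_of_eq_mul_add {K : Type*} [Field K] {m c x₁ x₂ y₁ y₂ : K}
    (h₁ : y₁ = m * x₁ + c) (h₂ : y₂ = m * x₂ + c) (hx : x₁ ≠ x₂) :
    (y₁ - y₂) / (x₁ - x₂) = m := by
  rw [h₁, h₂, add_sub_add_right_eq_sub, ← mul_sub, mul_div_cancel_right₀ _ (sub_ne_zero.mpr hx)]

theorem div_eq_mul_one_div_sub {K : Type*} [Field K] (θ₁ θ₂ a b : K)
    (hD : 1 + a + b ≠ 0) (hb : b ≠ 0) (hθ₂ : θ₂ ≠ 0) :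
    θ₁ * a / (1 + a + b) / (θ₂ * b / (1 + a + b)) =
      θ₁ * (1 / (θ₂ * b / (1 + a + b))) + -(θ₁ * (1 + b) / (θ₂ * b)) := by
  field_simp
  ring

theorem stmt_10_general (a₁ a₂ b θ₁ θ₂ : ℝ)
    (ha₁ : 0 ≤ a₁) (ha₂ : 0 ≤ a₂)
    (hb : 0 < b) (hθ₂ : θ₂ ≠ 0)
    (G₁₁ G₂₁ : Fin 2 → ℝ)
    (hG₁₁1 : G₁₁ 0 = θ₁ * a₁ / (1 + a₁ + b)) (hG₁₁2 : G₁₁ 1 = θ₁ * a₂ / (1 + a₂ + b))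
    (hG₂₁1 : G₂₁ 0 = θ₂ * b / (1 + a₁ + b)) (hG₂₁2 : G₂₁ 1 = θ₂ * b / (1 + a₂ + b))
    (hGne : G₂₁ 0 ≠ G₂₁ 1) :
    θ₁ = (G₁₁ 0 / G₂₁ 0 - G₁₁ 1 / G₂₁ 1) / (1 / G₂₁ 0 - 1 / G₂₁ 1) := by
  have hline₁ := div_eq_mul_one_div_sub θ₁ θ₂ a₁ b (by positivity) hb.ne' hθ₂
  have hline₂ := div_eq_mul_one_div_sub θ₁ θ₂ a₂ b (by positivity) hb.ne' hθ₂
  rw [← hG₁₁1, ← hG₂₁1] at hline₁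
  rw [← hG₁₁2, ← hG₂₁2] at hline₂
  have hinv : 1 / G₂₁ 0 ≠ 1 / G₂₁ 1 := by
    simpa only [one_div, ne_eq, inv_inj] using hGne
  exact (sub_div_sub_of_eq_mul_add hline₁ hline₂ hinv).symm

theorem stmt_10 (a₁ a₂ b θ₁ θ₂ : ℝ)
    (ha₁ : 0 ≤ a₁) (ha₂ : 0 ≤ a₂) (hne : a₁ ≠ a₂)
    (hb : 0 < b) (hθ₁ : θ₁ ≠ 0) (hθ₂ : θ₂ ≠ 0)
    (G₁₁ G₂₁ : Fin 2 → ℝ)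
    (hG₁₁1 : G₁₁ 0 = θ₁ * a₁ / (1 + a₁ + b)) (hG₁₁2 : G₁₁ 1 = θ₁ * a₂ / (1 + a₂ + b))
    (hG₂₁1 : G₂₁ 0 = θ₂ * b / (1 + a₁ + b)) (hG₂₁2 : G₂₁ 1 = θ₂ * b / (1 + a₂ + b))
    (hGne : G₂₁ 0 ≠ G₂₁ 1) :
    θ₁ = (G₁₁ 0 / G₂₁ 0 - G₁₁ 1 / G₂₁ 1) / (1 / G₂₁ 0 - 1 / G₂₁ 1) :=
  stmt_10_general a₁ a₂ b θ₁ θ₂ ha₁ ha₂ hb hθ₂ G₁₁ G₂₁ hG₁₁1 hG₁₁2 hG₂₁1 hG₂₁2 hGne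
end
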